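/- Let T and Ω be finite types, let ε ≥ 0 be a real number, let M : T → Ω → ℝ be a mechanism (nonnegative with ∑_{ω∈Ω} M(t)(ω) = 1 for every t ∈ T), and let d : T → T be a map. Suppose that for every nonnegative prior b : T → ℝ with ∑_{t∈T} b(t) = 1, and every ω ∈ Ω with ∑_{z∈T} M(z)(ω)·b(z) > 0 and ∑_{z∈T} M(d(z))(ω)·b(z) > 0, and every subset S ⊆ T, |∑_{t∈S} M(t)(ω)·b(t)/∑_{z∈T} M(z)(ω)·b(z) − ∑_{t∈S} M(d(t))(ω)·b(t)/∑_{z∈T} M(d(z))(ω)·b(z)| ≤ 1/2 − 1/(e^{ε}+1). Then for all t, t' ∈ T with d(t) = d(t') and every ω ∈ Ω with M(d(t))(ω) > 0, it holds that M(t)(ω) ≤ e^{ε} · M(t')(ω). -/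

import Mathlib

/-!
Take the prior that is uniform on `{t, t'}` and the event `{t}`. In Game 0 the posterior of `t`
is `M t ω / (M t ω + M t' ω)`; in Game i both candidates produce `M (d t) ω`, so the posterior
is `1 / 2`. Semantic privacy bounds the first by `1 / 2 + (1 / 2 - 1 / (e^ε + 1)) = e^ε / (e^ε + 1)`,
which rearranges to `M t ω ≤ e^ε * M t' ω`.
-/

open Finset

section PairPrior

variable {T : Type*} [DecidableEq T]

/-- When `t = t'` this is the point mass at `t`. -/
noncomputable def pairPrior (t t' : T) (z : T) : ℝ :=
  ((if z = t then 1 else 0) + (if z = t' then 1 else 0)) / 2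

lemma pairPrior_nonneg (t t' z : T) : 0 ≤ pairPrior t t' z := by
  unfold pairPrior
  split_ifs <;> norm_num

lemma sum_mul_pairPrior [Fintype T] (f : T → ℝ) (t t' : T) :
    ∑ z, f z * pairPrior t t' z = (f t + f t') / 2 := by
  simp [pairPrior, mul_div_assoc', mul_add, add_div, sum_add_distrib, ← sum_div]

lemma sum_pairPrior [Fintype T] (t t' : T) : ∑ z, pairPrior t t' z = 1 := by
  simpa using sum_mul_pairPrior (fun _ => (1 : ℝ)) t t'

lemma pairPrior_apply_left {t t' : T} (h : t ≠ t') : pairPrior t t' t = 1 / 2 := by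
  simp [pairPrior, h]

end PairPrior

noncomputable def posterior {T Ω : Type*} [Fintype T] (M : T → Ω → ℝ) (b : T → ℝ) (ω : Ω)
    (S : Finset T) : ℝ :=
  (∑ t ∈ S, M t ω * b t) / ∑ z, M z ω * b z

lemma posterior_pairPrior_singleton {T Ω : Type*} [Fintype T] [DecidableEq T]
    (M : T → Ω → ℝ) {t t' : T} (h : t ≠ t') (ω : Ω) :
    posterior M (pairPrior t t') ω {t} = M t ω / (M t ω + M t' ω) := by
  rw [posterior, sum_singleton, sum_mul_pairPrior, pairPrior_apply_left h]
  field_simp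

lemma le_mul_of_div_add_sub_half_le {A B k : ℝ} (hAB : 0 < A + B) (hk : 0 < k + 1)
    (h : A / (A + B) - 1 / 2 ≤ 1 / 2 - 1 / (k + 1)) : A ≤ k * B := by
  have hk' : 1 / 2 - 1 / (k + 1) + 1 / 2 = k / (k + 1) := by
    field_simp
    ring
  have h' : A / (A + B) ≤ k / (k + 1) := by linarith
  rw [div_le_div_iff₀ hAB hk] at h'
  linarith

theorem bayesian_semantic_privacy_implies_bdp_general
    {T : Type*} [Fintype T] {Ω : Type*} [Fintype Ω] (ε : ℝ) (hε : 0 ≤ ε)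
    (M : T → Ω → ℝ)
    (hM : ∀ t ω, 0 ≤ M t ω)
    (d : T → T)
    (hBSP : ∀ (b : T → ℝ), (∀ t, 0 ≤ b t) → (∑ t, b t = 1) →
      ∀ ω : Ω, 0 < ∑ z, M z ω * b z → 0 < ∑ z, M (d z) ω * b z →
        ∀ S : Finset T,
          |(∑ t ∈ S, M t ω * b t) / (∑ z, M z ω * b z) -
              (∑ t ∈ S, M (d t) ω * b t) / (∑ z, M (d z) ω * b z)|
            ≤ 1 / 2 - 1 / (Real.exp ε + 1)) :
    ∀ t t' : T, d t = d t' → ∀ ω : Ω, 0 < M (d t) ω →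
      M t ω ≤ Real.exp ε * M t' ω := by
  classical
  intro t t' hd ω hC
  rcases eq_or_ne t t' with rfl | hne
  · exact le_mul_of_one_le_left (hM t ω) (Real.one_le_exp hε)
  rcases (hM t ω).eq_or_lt with hA | hA
  · rw [← hA]
    exact mul_nonneg (Real.exp_pos ε).le (hM t' ω)
  have hAB : 0 < M t ω + M t' ω := add_pos_of_pos_of_nonneg hA (hM t' ω)
  have hGame0 := posterior_pairPrior_singleton M hne ω
  have hGameI : posterior (fun z => M (d z)) (pairPrior t t') ω {t} = 1 / 2 := by
    rw [posterior_pairPrior_singleton _ hne, ← hd]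
    field_simp
    ring
  have hBSP_pair := hBSP (pairPrior t t') (pairPrior_nonneg t t') (sum_pairPrior t t') ω
    (by rw [sum_mul_pairPrior]; positivity) (by rw [sum_mul_pairPrior, ← hd]; linarith) {t}
  change |posterior M _ ω {t} - posterior (fun z => M (d z)) _ ω {t}| ≤ _ at hBSP_pair
  rw [hGame0, hGameI] at hBSP_pair
  exact le_mul_of_div_add_sub_half_le hAB (by positivity) (abs_le.mp hBSP_pair).2

theorem bayesian_semantic_privacy_implies_bdp
    {T : Type*} [Fintype T] {Ω : Type*} [Fintype Ω] (ε : ℝ) (hε : 0 ≤ ε)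
    (M : T → Ω → ℝ)
    (hM : ∀ t ω, 0 ≤ M t ω) (hMsum : ∀ t, ∑ ω, M t ω = 1)
    (d : T → T)
    (hBSP : ∀ (b : T → ℝ), (∀ t, 0 ≤ b t) → (∑ t, b t = 1) →
      ∀ ω : Ω, 0 < ∑ z, M z ω * b z → 0 < ∑ z, M (d z) ω * b z →
        ∀ S : Finset T,
          |(∑ t ∈ S, M t ω * b t) / (∑ z, M z ω * b z) -
              (∑ t ∈ S, M (d t) ω * b t) / (∑ z, M (d z) ω * b z)|
            ≤ 1 / 2 - 1 / (Real.exp ε + 1)) :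
    ∀ t t' : T, d t = d t' → ∀ ω : Ω, 0 < M (d t) ω →
      M t ω ≤ Real.exp ε * M t' ω :=
  bayesian_semantic_privacy_implies_bdp_general ε hε M hM d hBSP
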